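/- Let λ > 0, d_H = d_V = λ/2, and integers N_H ≥ 2, N_V ≥ 2, with N = N_H N_V. Define the exact correlation matrix R ∈ ℝ^{N×N} by [R]_{n,m} = sinc(2‖u_n − u_m‖/λ) with u_n = (0, i(n) d_H, j(n) d_V), i(n) = (n−1) mod N_H, j(n) = ⌊(n−1)/N_H⌋, and define the Kronecker-model approximation R^approx = R_V ⊗ R_H, where R_V ∈ ℝ^{N_V×N_V} has entries [R_V]_{a,b} = sinc(2|a−b| d_V/λ) and R_H ∈ ℝ^{N_H×N_H} has entries [R_H]_{a,b} = sinc(2|a−b| d_H/λ). Then R^approx equals the N × N identity matrix, while R is not the identity matrix; in particular R ≠ R^approx. -/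

import Mathlib

open Real Matrix
open scoped Kronecker

/-- The normalized sinc function: `sinc x = sin(π x)/(π x)` for `x ≠ 0`, `sinc 0 = 1`. -/
noncomputable def sinc (x : ℝ) : ℝ :=
  if x = 0 then 1 else Real.sin (Real.pi * x) / (Real.pi * x)

/-- Position of the `n`-th RIS element (`n = 1, …, N`, indexed row by row) on a
rectangular grid in the `x = 0` plane of `ℝ³`, with horizontal spacing `dH`,
vertical spacing `dV` and `NH` elements per row:
`u n = (0, ((n−1) mod NH) dH, (⌊(n−1)/NH⌋) dV)`. -/
noncomputable def risPos (dH dV : ℝ) (NH : ℕ) (n : ℕ) : EuclideanSpace ℝ (Fin 3) :=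
  (WithLp.equiv 2 (Fin 3 → ℝ)).symm
    ![0, (((n - 1) % NH : ℕ) : ℝ) * dH, (((n - 1) / NH : ℕ) : ℝ) * dV]

/-! At half-wavelength spacing every one-dimensional inter-element distance, scaled by `2/λ`, is an
integer, so both Kronecker factors have `sinc` of nonzero integers off the diagonal and are
identities. The exact model sees the diagonal neighbours `1` and `N_H + 2` at distance `λ/√2`, and
`sinc √2 ≠ 0` because `√2` is irrational. -/

lemma sinc_natCast (k : ℕ) : _root_.sinc k = if k = 0 then 1 else 0 := by
  split_ifs with hk
  · simp [hk, _root_.sinc]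
  · rw [_root_.sinc, if_neg (Nat.cast_ne_zero.mpr hk), mul_comm, Real.sin_nat_mul_pi, zero_div]

lemma sinc_ne_zero_of_irrational {x : ℝ} (hx : Irrational x) : _root_.sinc x ≠ 0 := by
  have hx₀ : x ≠ 0 := hx.ne_zero
  rw [_root_.sinc, if_neg hx₀]
  refine div_ne_zero (fun hsin => ?_) (mul_ne_zero Real.pi_ne_zero hx₀)
  obtain ⟨n, hn⟩ := Real.sin_eq_zero_iff.mp hsin
  exact hx ⟨n, by simpa using mul_right_cancel₀ Real.pi_ne_zero (hn.trans (mul_comm _ _))⟩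

lemma ula_correlation_halfWave_eq_one {k : ℕ} {lam : ℝ} (hlam : lam ≠ 0)
    (M : Matrix (Fin k) (Fin k) ℝ)
    (hM : ∀ a b,
      M a b = _root_.sinc (2 * (((a.val : ℤ) - b.val).natAbs : ℝ) * (lam / 2) / lam)) :
    M = 1 := by
  ext a b
  have harg : ∀ t : ℝ, 2 * t * (lam / 2) / lam = t := fun t => by field_simp
  rw [hM, harg, sinc_natCast, Matrix.one_apply]
  simp only [Int.natAbs_eq_zero, sub_eq_zero, Nat.cast_inj, Fin.val_inj]

lemma risPos_one (dH dV : ℝ) (NH : ℕ) : risPos dH dV NH 1 = 0 := by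
  ext i
  fin_cases i <;> simp [risPos]

lemma risPos_add_two (dH dV : ℝ) {NH : ℕ} (hNH : 2 ≤ NH) :
    risPos dH dV NH (NH + 2) = (WithLp.equiv 2 (Fin 3 → ℝ)).symm ![0, dH, dV] := by
  have hmod : (NH + 1) % NH = 1 := by
    rw [Nat.add_mod_left, Nat.mod_eq_of_lt (by omega)]
  have hdiv : (NH + 1) / NH = 1 := by
    rw [Nat.add_div_left 1 (by omega), Nat.div_eq_of_lt (by omega)]
  simp only [risPos, show NH + 2 - 1 = NH + 1 by omega, hmod, hdiv, Nat.cast_one, one_mul]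

lemma norm_equiv_symm_vec3 (x y z : ℝ) :
    ‖(WithLp.equiv 2 (Fin 3 → ℝ)).symm ![x, y, z]‖ = √(x ^ 2 + y ^ 2 + z ^ 2) := by
  simp [EuclideanSpace.norm_eq, Fin.sum_univ_three]

lemma sinc_risPos_diagonal_halfWave {lam : ℝ} (hlam : 0 < lam) {NH : ℕ} (hNH : 2 ≤ NH) :
    _root_.sinc (2 * ‖risPos (lam / 2) (lam / 2) NH 1 - risPos (lam / 2) (lam / 2) NH (NH + 2)‖
      / lam) = _root_.sinc √2 := by
  rw [risPos_one, risPos_add_two _ _ hNH, zero_sub, norm_neg, norm_equiv_symm_vec3]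
  congr 1
  have hsq : (0 : ℝ) ^ 2 + (lam / 2) ^ 2 + (lam / 2) ^ 2 = (lam / 2) ^ 2 * 2 := by ring
  rw [hsq, Real.sqrt_mul (by positivity), Real.sqrt_sq (by positivity)]
  field_simp

/-- At half-wavelength spacings `d_H = d_V = λ/2` with `N_H, N_V ≥ 2`,
the Kronecker approximation `R^approx = R_V ⊗ R_H` of the exact correlation matrix
`[R]_{n,m} = sinc(2‖u_n − u_m‖/λ)` equals the identity matrix, while the exact
matrix `R` is not the identity; in particular `R ≠ R^approx` (under any
identification of the index sets). -/
theorem stmt_12 (lam dH dV : ℝ) (NH NV : ℕ)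
    (hlam : 0 < lam) (hdH : dH = lam / 2) (hdV : dV = lam / 2)
    (hNH : 2 ≤ NH) (hNV : 2 ≤ NV)
    (R : Matrix (Fin (NH * NV)) (Fin (NH * NV)) ℝ)
    (hR : ∀ n m, R n m =
      _root_.sinc (2 * ‖risPos dH dV NH (n.val + 1) - risPos dH dV NH (m.val + 1)‖ / lam))
    (RV : Matrix (Fin NV) (Fin NV) ℝ)
    (hRV : ∀ a b, RV a b = _root_.sinc (2 * (((a.val : ℤ) - b.val).natAbs : ℝ) * dV / lam))
    (RH : Matrix (Fin NH) (Fin NH) ℝ)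
    (hRH : ∀ a b, RH a b = _root_.sinc (2 * (((a.val : ℤ) - b.val).natAbs : ℝ) * dH / lam)) :
    RV ⊗ₖ RH = (1 : Matrix (Fin NV × Fin NH) (Fin NV × Fin NH) ℝ)
      ∧ R ≠ (1 : Matrix (Fin (NH * NV)) (Fin (NH * NV)) ℝ)
      ∧ ∀ e : Fin (NH * NV) ≃ Fin NV × Fin NH, R ≠ (RV ⊗ₖ RH).submatrix e e := by
  subst hdH hdV
  have hK : RV ⊗ₖ RH = 1 := by
    rw [ula_correlation_halfWave_eq_one hlam.ne' RV hRV,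
      ula_correlation_halfWave_eq_one hlam.ne' RH hRH, Matrix.one_kronecker_one]
  have hRne : R ≠ 1 := by
    let n₀ : Fin (NH * NV) := ⟨0, by positivity⟩
    let m₀ : Fin (NH * NV) := ⟨NH + 1, by nlinarith⟩
    have hentry : R n₀ m₀ = _root_.sinc √2 :=
      (hR n₀ m₀).trans (sinc_risPos_diagonal_halfWave hlam hNH)
    intro hR1
    rw [hR1, Matrix.one_apply_ne (by simp [n₀, m₀, Fin.ext_iff])] at hentry
    exact sinc_ne_zero_of_irrational irrational_sqrt_two hentry.symm
  refine ⟨hK, hRne, fun e => ?_⟩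
  rwa [hK, Matrix.submatrix_one_equiv]
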